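/- arXiv:1008.3602 — 5 statements merged into one kernel-verified Lean document; each statement's English description precedes it below -/
import Mathlib

section
/- Define θ : ℝ → ℝ by θ(s) = −s³ + 3s·sinh²(s) + 3·sinh³(s)·cosh(s) − 3s²·sinh(s)·cosh(s) − 2s³·cosh²(s). Then θ(s) ≥ 0 for every s ≥ 1 (indeed θ(1) > 0 and θ'(s) > 0 for all s ≥ 1). -/
/-!
Modulo `cosh² = 1 + sinh²`, the derivative factors as
`θ'(s) = 4 cosh s · (3 cosh s (sinh² s - s²) - s³ sinh s)`. For `s ≥ 1` the Taylor bound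
`sinh s ≥ s + s³/6` gives `sinh² s - s² ≥ s⁴/3`, so the bracket is at least
`s⁴ cosh s - s³ sinh s > 0`. The same bound at `s = 1` shows `θ 1 > 0`, and monotonicity does the rest.
-/

open Real Set

theorem Real.add_pow_three_div_six_le_sinh {r : ℝ} (hr : 0 ≤ r) : r + r ^ 3 / 6 ≤ sinh r := by
  have h := sum_le_hasSum (Finset.range 2) (fun n _ ↦ by positivity) (hasSum_sinh r)
  norm_num [Finset.sum_range_succ, Nat.factorial] at h
  linarith

noncomputable def theta (s : ℝ) : ℝ :=
  -s ^ 3 + 3 * s * sinh s ^ 2 + 3 * sinh s ^ 3 * cosh s - 3 * s ^ 2 * sinh s * cosh s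
    - 2 * s ^ 3 * cosh s ^ 2

theorem hasDerivAt_theta (s : ℝ) :
    HasDerivAt theta (4 * cosh s * (3 * cosh s * (sinh s ^ 2 - s ^ 2) - s ^ 3 * sinh s)) s := by
  have hsinh := hasDerivAt_sinh s
  have hcosh := hasDerivAt_cosh s
  have hid := hasDerivAt_id' s
  have h := ((((hid.pow 3).neg.add ((hid.const_mul 3).mul (hsinh.pow 2))).add
    (((hsinh.pow 3).const_mul 3).mul hcosh)).sub ((((hid.pow 2).const_mul 3).mul hsinh).mul hcosh)).sub
    (((hid.pow 3).const_mul 2).mul (hcosh.pow 2))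
  refine (h.congr_of_eventuallyEq (.of_forall fun u ↦ ?_)).congr_deriv ?_
  · rfl
  · simp only [Pi.pow_apply, Pi.mul_apply]
    push_cast
    linear_combination 3 * (s ^ 2 - sinh s ^ 2) * cosh_sq s

theorem theta_deriv_factor_pos {s : ℝ} (hs : 1 ≤ s) :
    0 < 3 * cosh s * (sinh s ^ 2 - s ^ 2) - s ^ 3 * sinh s := by
  have hs0 : 0 ≤ s := zero_le_one.trans hs
  have hsinh := add_pow_three_div_six_le_sinh hs0
  have hs3 : 0 ≤ s ^ 3 := pow_nonneg hs0 3
  have hsq : s ^ 4 / 3 ≤ sinh s ^ 2 - s ^ 2 :=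
    calc s ^ 4 / 3 = s ^ 3 / 6 * (2 * s) := by ring
      _ ≤ (sinh s - s) * (sinh s + s) := by gcongr <;> linarith
      _ = sinh s ^ 2 - s ^ 2 := by ring
  have hs34 : s ^ 3 ≤ s ^ 4 := pow_le_pow_right₀ hs (by norm_num)
  have hcosh := cosh_pos s
  have : s ^ 3 * sinh s < 3 * cosh s * (sinh s ^ 2 - s ^ 2) :=
    calc s ^ 3 * sinh s < s ^ 3 * cosh s := by gcongr; exact sinh_lt_cosh s
      _ ≤ s ^ 4 * cosh s := by gcongr
      _ = 3 * cosh s * (s ^ 4 / 3) := by ring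
      _ ≤ 3 * cosh s * (sinh s ^ 2 - s ^ 2) := by gcongr
  linarith

theorem deriv_theta_pos {s : ℝ} (hs : 1 ≤ s) : 0 < deriv theta s := by
  rw [(hasDerivAt_theta s).deriv]
  exact mul_pos (by positivity) (theta_deriv_factor_pos hs)

theorem theta_one_pos : 0 < theta 1 := by
  have hsinh : 7 / 6 ≤ sinh 1 := by
    have := add_pow_three_div_six_le_sinh zero_le_one
    norm_num at this
    linarith
  have hcosh : 3 / 2 ≤ cosh 1 := by nlinarith [cosh_sq 1, cosh_pos 1]
  have : theta 1 = sinh 1 ^ 2 - 3 + 3 * (sinh 1 * cosh 1) * (sinh 1 ^ 2 - 1) := by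
    simp only [theta]; linear_combination (-2:ℝ) * cosh_sq 1
  rw [this]
  have hsc : 7 / 4 ≤ sinh 1 * cosh 1 := by nlinarith
  have hsq : 49 / 36 ≤ sinh 1 ^ 2 := by nlinarith
  nlinarith [mul_le_mul hsc (show 13 / 36 ≤ sinh 1 ^ 2 - 1 by linarith) (by norm_num) (by linarith)]

theorem strictMonoOn_theta : StrictMonoOn theta (Ici 1) :=
  strictMonoOn_of_deriv_pos (convex_Ici 1)
    (fun s _ ↦ (hasDerivAt_theta s).continuousAt.continuousWithinAt)
    (fun s hs ↦ deriv_theta_pos (by simpa using interior_subset hs))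

/-- The auxiliary function
`θ(s) = −s³ + 3s sinh²s + 3 sinh³s cosh s − 3s² sinh s cosh s − 2s³ cosh²s`
satisfies `θ(s) ≥ 0` for all `s ≥ 1`; indeed `θ(1) > 0` and `θ'(s) > 0` for `s ≥ 1`. -/
theorem theta_nonneg (θ : ℝ → ℝ)
    (hθ : ∀ s, θ s = -s ^ 3 + 3 * s * Real.sinh s ^ 2
      + 3 * Real.sinh s ^ 3 * Real.cosh s
      - 3 * s ^ 2 * Real.sinh s * Real.cosh s
      - 2 * s ^ 3 * Real.cosh s ^ 2) :
    (∀ s : ℝ, 1 ≤ s → 0 ≤ θ s) ∧ 0 < θ 1 ∧ (∀ s : ℝ, 1 ≤ s → 0 < deriv θ s) := by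
  obtain rfl : θ = theta := funext hθ
  refine ⟨fun s hs ↦ ?_, theta_one_pos, fun s hs ↦ deriv_theta_pos hs⟩
  exact theta_one_pos.le.trans (strictMonoOn_theta.monotoneOn self_mem_Ici hs hs)
end

section
/- Define t : (0,∞) → ℝ by t(s) = 2s³·(sinh(s)·cosh(s) + s)/(sinh²(s) − s²). Then t is well defined for s > 0 (since sinh(s) > s for s > 0, so sinh²(s) − s² > 0) and t is strictly increasing on the interval [1, ∞), i.e., t'(s) > 0 for all s ≥ 1. -/
/-!
Clearing denominators, `t'(s) = 2 s² K(s) / (sinh² s − s²)²` with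
`K = 3 (sinh s cosh s + s)(sinh² s − s²) − 2 s³ sinh² s`, and `cosh² = 1 + sinh²` turns `K` into
`3 cosh s (sinh³ s − s³ cosh s) + s sinh s ((s² + 3) sinh s − 3 s cosh s)`.
Both brackets are positive for `s > 0`: the first by Lazarević's inequality, the second by a
Padé-type bound for `tanh`. Each of these hyperbolic inequalities holds at `0` and follows by
checking the sign of the derivative of the difference, so `t' > 0` on all of `(0, ∞)`.
-/

open Real Set

section Comparison

variable {f f' : ℝ → ℝ} {a : ℝ}

theorem monotoneOn_Ici_of_hasDerivAt_nonneg (hf : ∀ x ∈ Ici a, HasDerivAt f (f' x) x)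
    (hf' : ∀ x ∈ Ioi a, 0 ≤ f' x) : MonotoneOn f (Ici a) :=
  monotoneOn_of_hasDerivWithinAt_nonneg (convex_Ici a)
    (fun x hx => (hf x hx).continuousAt.continuousWithinAt)
    (fun x hx => (hf x (interior_subset hx)).hasDerivWithinAt)
    (fun x hx => hf' x (by simpa using hx))

theorem strictMonoOn_Ici_of_hasDerivAt_pos (hf : ∀ x ∈ Ici a, HasDerivAt f (f' x) x)
    (hf' : ∀ x ∈ Ioi a, 0 < f' x) : StrictMonoOn f (Ici a) :=
  strictMonoOn_of_hasDerivWithinAt_pos (convex_Ici a)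
    (fun x hx => (hf x hx).continuousAt.continuousWithinAt)
    (fun x hx => (hf x (interior_subset hx)).hasDerivWithinAt)
    (fun x hx => hf' x (by simpa using hx))

end Comparison

namespace Real

theorem sinh_lt_mul_cosh {x : ℝ} (hx : 0 < x) : sinh x < x * cosh x := by
  have hmono : StrictMonoOn (fun y => y * cosh y - sinh y) (Ici 0) :=
    strictMonoOn_Ici_of_hasDerivAt_pos (f' := fun y => y * sinh y)
      (fun y _ => (((hasDerivAt_id y).mul (hasDerivAt_cosh y)).sub (hasDerivAt_sinh y)).congr_deriv
        (by simp))
      (fun y hy => mul_pos hy (sinh_pos_iff.2 hy))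
  simpa using hmono self_mem_Ici hx.le hx

theorem one_add_sq_div_two_le_cosh (x : ℝ) : 1 + x ^ 2 / 2 ≤ cosh x := by
  have hmono : MonotoneOn (fun y => cosh y - (1 + y ^ 2 / 2)) (Ici 0) :=
    monotoneOn_Ici_of_hasDerivAt_nonneg (f' := fun y => sinh y - y)
      (fun y _ => ((hasDerivAt_cosh y).sub
        (((hasDerivAt_pow 2 y).div_const 2).const_add 1)).congr_deriv (by ring))
      (fun y hy => sub_nonneg.2 (self_le_sinh_iff.2 hy.le))
  rcases le_total 0 x with hx | hx
  · simpa using hmono self_mem_Ici hx hx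
  · simpa using hmono self_mem_Ici (neg_nonneg.2 hx) (neg_nonneg.2 hx)

theorem add_pow_three_div_six_le_sinh_s3 {x : ℝ} (hx : 0 ≤ x) : x + x ^ 3 / 6 ≤ sinh x := by
  have hmono : MonotoneOn (fun y => sinh y - (y + y ^ 3 / 6)) (Ici 0) :=
    monotoneOn_Ici_of_hasDerivAt_nonneg (f' := fun y => cosh y - (1 + y ^ 2 / 2))
      (fun y _ => ((hasDerivAt_sinh y).sub
        ((hasDerivAt_id y).add ((hasDerivAt_pow 3 y).div_const 6))).congr_deriv (by simp; ring))
      (fun y _ => sub_nonneg.2 (one_add_sq_div_two_le_cosh y))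
  simpa using hmono self_mem_Ici hx hx

theorem three_mul_mul_cosh_lt {x : ℝ} (hx : 0 < x) : 3 * x * cosh x < (x ^ 2 + 3) * sinh x := by
  have hmono : StrictMonoOn (fun y => (y ^ 2 + 3) * sinh y - 3 * y * cosh y) (Ici 0) :=
    strictMonoOn_Ici_of_hasDerivAt_pos (f' := fun y => y * (y * cosh y - sinh y))
      (fun y _ => ((((hasDerivAt_pow 2 y).add_const 3).mul (hasDerivAt_sinh y)).sub
        (((hasDerivAt_id y).const_mul 3).mul (hasDerivAt_cosh y))).congr_deriv (by simp; ring))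
      (fun y hy => mul_pos hy (sub_pos.2 (sinh_lt_mul_cosh hy)))
  simpa using hmono self_mem_Ici hx.le hx

/-- Lazarević's inequality. -/
theorem pow_three_mul_cosh_le_sinh_pow_three {x : ℝ} (hx : 0 ≤ x) :
    x ^ 3 * cosh x ≤ sinh x ^ 3 := by
  have hderiv_nonneg :
      ∀ y > 0, 0 ≤ 3 * sinh y ^ 2 * cosh y - 3 * y ^ 2 * cosh y - y ^ 3 * sinh y := by
    intro y hy
    have hsq : y ^ 4 / 3 ≤ sinh y ^ 2 - y ^ 2 := by
      nlinarith [add_pow_three_div_six_le_sinh_s3 hy.le, pow_pos hy 3]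
    have hsinh : y ^ 3 * sinh y ≤ y ^ 4 * cosh y := by
      nlinarith [mul_lt_mul_of_pos_left (sinh_lt_mul_cosh hy) (pow_pos hy 3)]
    nlinarith [mul_le_mul_of_nonneg_left hsq (cosh_pos y).le]
  have hmono : MonotoneOn (fun y => sinh y ^ 3 - y ^ 3 * cosh y) (Ici 0) :=
    monotoneOn_Ici_of_hasDerivAt_nonneg
      (fun y _ => (((hasDerivAt_sinh y).pow 3).sub
        ((hasDerivAt_pow 3 y).mul (hasDerivAt_cosh y))).congr_deriv (by simp; ring)) hderiv_nonneg
  simpa using hmono self_mem_Ici hx hx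

theorem two_mul_pow_three_mul_sinh_sq_lt {s : ℝ} (hs : 0 < s) :
    2 * s ^ 3 * sinh s ^ 2 < 3 * (sinh s * cosh s + s) * (sinh s ^ 2 - s ^ 2) := by
  have hlaz : 0 ≤ cosh s * (sinh s ^ 3 - s ^ 3 * cosh s) :=
    mul_nonneg (cosh_pos s).le (sub_nonneg.2 (pow_three_mul_cosh_le_sinh_pow_three hs.le))
  have hpade : 0 < s * sinh s * ((s ^ 2 + 3) * sinh s - 3 * s * cosh s) :=
    mul_pos (mul_pos hs (sinh_pos_iff.2 hs)) (sub_pos.2 (three_mul_mul_cosh_lt hs))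
  linear_combination 3 * hlaz + hpade - 3 * s ^ 3 * cosh_sq s

theorem sq_lt_sinh_sq {x : ℝ} (hx : x ≠ 0) : x ^ 2 < sinh x ^ 2 :=
  sq_lt_sq.2 (abs_sinh x ▸ self_lt_sinh_iff.2 (abs_pos.2 hx))

end Real

noncomputable def tFormula (s : ℝ) : ℝ :=
  2 * s ^ 3 * (sinh s * cosh s + s) / (sinh s ^ 2 - s ^ 2)

noncomputable def tFormulaDeriv (s : ℝ) : ℝ :=
  2 * s ^ 2 * (3 * (sinh s * cosh s + s) * (sinh s ^ 2 - s ^ 2) - 2 * s ^ 3 * sinh s ^ 2) /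
    (sinh s ^ 2 - s ^ 2) ^ 2

theorem hasDerivAt_tFormula {s : ℝ} (hs : s ≠ 0) : HasDerivAt tFormula (tFormulaDeriv s) s := by
  have hnum := ((hasDerivAt_pow 3 s).const_mul 2).mul
    (((hasDerivAt_sinh s).mul (hasDerivAt_cosh s)).add (hasDerivAt_id s))
  have hden := ((hasDerivAt_sinh s).pow 2).sub (hasDerivAt_pow 2 s)
  refine (hnum.div hden (sub_pos.2 (sq_lt_sinh_sq hs)).ne').congr_deriv ?_
  simp only [tFormulaDeriv, Pi.mul_apply, Pi.add_apply, Pi.sub_apply, Pi.pow_apply, id]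
  congr 1
  norm_num
  linear_combination (-2 * s ^ 3 * (sinh s ^ 2 + s ^ 2)) * cosh_sq s

theorem tFormulaDeriv_pos {s : ℝ} (hs : 0 < s) : 0 < tFormulaDeriv s := by
  have := sub_pos.2 (two_mul_pow_three_mul_sinh_sq_lt hs)
  have := sub_pos.2 (sq_lt_sinh_sq hs.ne')
  unfold tFormulaDeriv
  positivity

/-- The function `t(s) = 2s³ (sinh s cosh s + s)/(sinh² s − s²)` is well defined for
`s > 0` (since `sinh s > s`, hence `sinh² s − s² > 0`) and is strictly increasing on
`[1, ∞)`, with `t'(s) > 0` for every `s ≥ 1`. -/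
theorem t_strictMono (t : ℝ → ℝ)
    (ht : ∀ s : ℝ, 0 < s →
      t s = 2 * s ^ 3 * (Real.sinh s * Real.cosh s + s) / (Real.sinh s ^ 2 - s ^ 2)) :
    (∀ s : ℝ, 0 < s → s < Real.sinh s ∧ 0 < Real.sinh s ^ 2 - s ^ 2) ∧
    StrictMonoOn t (Set.Ici (1 : ℝ)) ∧
    (∀ s : ℝ, 1 ≤ s → 0 < deriv t s) := by
  have hderiv : ∀ s ∈ Ici (1 : ℝ), HasDerivAt t (tFormulaDeriv s) s := fun s hs =>
    (hasDerivAt_tFormula (one_pos.trans_le hs).ne').congr_of_eventuallyEq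
      (Filter.eventually_of_mem (Ioi_mem_nhds (one_pos.trans_le hs)) ht)
  refine ⟨fun s hs => ⟨self_lt_sinh_iff.2 hs, sub_pos.2 (sq_lt_sinh_sq hs.ne')⟩,
    strictMonoOn_Ici_of_hasDerivAt_pos hderiv fun s hs => tFormulaDeriv_pos (one_pos.trans hs),
    fun s hs => ?_⟩
  rw [(hderiv s hs).deriv]
  exact tFormulaDeriv_pos (one_pos.trans_le hs)
end

section
/- Let η > 0 and l > 0, and note sinh²(ηl) − η²l² > 0. Define Y : ℝ → ℝ by Y(s) = cosh(ηs) − [((sinh(ηl))(cosh(ηl)) + ηl)/(sinh²(ηl) − η²l²)]·sinh(ηs) + [(η(sinh(ηl))(cosh(ηl)) + η²l)/(sinh²(ηl) − η²l²)]·s·cosh(ηs) − [η·sinh²(ηl)/(sinh²(ηl) − η²l²)]·s·sinh(ηs). Then Y satisfies Y''''(s) − 2η²Y''(s) + η⁴Y(s) = 0 for all s, and moreover Y(0) = 1, Y(l) = 0, Y'(0) = 0, Y'(l) = 0, and Y'''(0) = 2η³·((sinh(ηl))(cosh(ηl)) + ηl)/(sinh²(ηl) − η²l²). -/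
/-!
`Y` is of the form `(a + c s) cosh(ηs) + (b + d s) sinh(ηs)`, the general solution of
`(D² − η²)² Y = 0`, on which differentiation acts by a linear map of the coefficients
`(a, b, c, d)`. So the equation holds for every choice of coefficients, and the values at `0` are
read off the coefficients. Since the coefficient of `s cosh(ηs)` is `η` times that of `−sinh(ηs)`, the
derivative vanishes at `0`; `Y'(l) = 0` is a polynomial identity in `ηl, sinh(ηl), cosh(ηl)`, and
`Y(l) = 0` comes down to `cosh² − sinh² = 1`.
-/

open Real

noncomputable def quasiCoshSinh (η a b c d : ℝ) (s : ℝ) : ℝ :=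
  (a + c * s) * cosh (η * s) + (b + d * s) * sinh (η * s)

namespace quasiCoshSinh

variable (η a b c d : ℝ)

theorem hasDerivAt (s : ℝ) :
    HasDerivAt (quasiCoshSinh η a b c d)
      (quasiCoshSinh η (η * b + c) (η * a + d) (η * d) (η * c) s) s := by
  have hlin : HasDerivAt (fun s : ℝ => η * s) η s := by
    simpa using (hasDerivAt_id s).const_mul η
  have hcosh := (hasDerivAt_cosh (η * s)).comp s hlin
  have hsinh := (hasDerivAt_sinh (η * s)).comp s hlin
  have hc := ((hasDerivAt_id s).const_mul c).const_add a
  have hd := ((hasDerivAt_id s).const_mul d).const_add b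
  refine ((hc.mul hcosh).add (hd.mul hsinh)).congr_deriv ?_
  simp only [quasiCoshSinh, id, Function.comp_apply]
  ring

theorem deriv_eq :
    deriv (quasiCoshSinh η a b c d) = quasiCoshSinh η (η * b + c) (η * a + d) (η * d) (η * c) :=
  funext fun s => (hasDerivAt η a b c d s).deriv

theorem ode (s : ℝ) :
    iteratedDeriv 4 (quasiCoshSinh η a b c d) s
      - 2 * η ^ 2 * iteratedDeriv 2 (quasiCoshSinh η a b c d) s
      + η ^ 4 * quasiCoshSinh η a b c d s = 0 := by
  simp only [iteratedDeriv_succ', iteratedDeriv_zero, deriv_eq, quasiCoshSinh]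
  ring

theorem apply_zero : quasiCoshSinh η a b c d 0 = a := by
  simp [quasiCoshSinh]

theorem deriv_zero : deriv (quasiCoshSinh η a b c d) 0 = η * b + c := by
  simp [deriv_eq, apply_zero]

theorem iteratedDeriv_three_zero :
    iteratedDeriv 3 (quasiCoshSinh η a b c d) 0 = η ^ 3 * b + 3 * η ^ 2 * c := by
  simp only [iteratedDeriv_succ', iteratedDeriv_zero, deriv_eq, apply_zero]
  ring

end quasiCoshSinh

theorem sq_lt_sinh_sq {x : ℝ} (hx : 0 < x) : x ^ 2 < sinh x ^ 2 :=
  pow_lt_pow_left₀ (self_lt_sinh_iff.2 hx) hx.le two_ne_zero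

/-- The explicit function `Y` built from `η, l > 0` solves `Y'''' − 2η² Y'' + η⁴ Y = 0`
with `Y(0) = 1`, `Y(l) = 0`, `Y'(0) = 0`, `Y'(l) = 0`, and
`Y'''(0) = 2η³ (sinh(ηl) cosh(ηl) + ηl)/(sinh²(ηl) − η²l²)`. -/
theorem explicit_Y_properties (η l : ℝ) (hη : 0 < η) (hl : 0 < l) (Y : ℝ → ℝ)
    (hY : ∀ s : ℝ, Y s =
      Real.cosh (η * s)
      - ((Real.sinh (η * l) * Real.cosh (η * l) + η * l) /
          (Real.sinh (η * l) ^ 2 - η ^ 2 * l ^ 2)) * Real.sinh (η * s)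
      + ((η * Real.sinh (η * l) * Real.cosh (η * l) + η ^ 2 * l) /
          (Real.sinh (η * l) ^ 2 - η ^ 2 * l ^ 2)) * s * Real.cosh (η * s)
      - ((η * Real.sinh (η * l) ^ 2) /
          (Real.sinh (η * l) ^ 2 - η ^ 2 * l ^ 2)) * s * Real.sinh (η * s)) :
    0 < Real.sinh (η * l) ^ 2 - η ^ 2 * l ^ 2 ∧
    (∀ s : ℝ,
      iteratedDeriv 4 Y s - 2 * η ^ 2 * iteratedDeriv 2 Y s + η ^ 4 * Y s = 0) ∧
    Y 0 = 1 ∧ Y l = 0 ∧ deriv Y 0 = 0 ∧ deriv Y l = 0 ∧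
    iteratedDeriv 3 Y 0 =
      2 * η ^ 3 * ((Real.sinh (η * l) * Real.cosh (η * l) + η * l) /
        (Real.sinh (η * l) ^ 2 - η ^ 2 * l ^ 2)) := by
  set D := sinh (η * l) ^ 2 - η ^ 2 * l ^ 2
  set A := (sinh (η * l) * cosh (η * l) + η * l) / D
  set C := η * sinh (η * l) ^ 2 / D
  have hD : 0 < D := sub_pos.2 (mul_pow η l 2 ▸ sq_lt_sinh_sq (mul_pos hη hl))
  have hB : (η * sinh (η * l) * cosh (η * l) + η ^ 2 * l) / D = η * A := by
    simp only [A]; ring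
  have hYq : Y = quasiCoshSinh η 1 (-A) (η * A) (-C) := funext fun s => by
    rw [hY, hB, quasiCoshSinh]; ring
  subst hYq
  refine ⟨hD, quasiCoshSinh.ode _ _ _ _ _, quasiCoshSinh.apply_zero .., ?Yl, ?Y'0, ?Y'l, ?Y'''0⟩
  case Y'0 => rw [quasiCoshSinh.deriv_zero]; ring
  case Y'''0 => rw [quasiCoshSinh.iteratedDeriv_three_zero]; ring
  case Yl =>
    simp only [quasiCoshSinh, A, C]
    field_simp
    linear_combination η * l * sinh (η * l) * cosh_sq (η * l)
  case Y'l =>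
    simp only [quasiCoshSinh.deriv_eq, quasiCoshSinh, A, C]
    field_simp
    ring
end

section
/- Let n ≥ 2, let l₁, …, lₙ > 0, and let m₁, …, m_{n−1} be positive integers. Set η = (Σ_{i=1}^{n−1} (m_iπ/l_i)²)^{1/2} and let Y : ℝ → ℝ be defined by Y(s) = cosh(ηs) − [((sinh(ηlₙ))(cosh(ηlₙ)) + ηlₙ)/(sinh²(ηlₙ) − η²lₙ²)]·sinh(ηs) + [(η(sinh(ηlₙ))(cosh(ηlₙ)) + η²lₙ)/(sinh²(ηlₙ) − η²lₙ²)]·s·cosh(ηs) − [η·sinh²(ηlₙ)/(sinh²(ηlₙ) − η²lₙ²)]·s·sinh(ηs). Define u : ℝⁿ → ℝ by u(x) = (Π_{i=1}^{n−1} sin(m_iπx_i/l_i))·Y(xₙ). Then: (i) Δ²u = 0 identically on ℝⁿ; (ii) ∂u/∂xₙ(x) = 0 whenever xₙ = 0; (iii) u(x) = 0 and ∂u/∂xₙ(x) = 0 whenever xₙ = lₙ; (iv) u(x) = 0 and Δu(x) = 0 whenever x_i ∈ {0, l_i} for some i ∈ {1, …, n−1}; and (v) for every x with xₙ = 0, ∂(Δu)/∂xₙ(x)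 = 2η³·[((sinh(ηlₙ))(cosh(ηlₙ)) + ηlₙ)/(sinh²(ηlₙ) − η²lₙ²)]·u(x). -/
/-- Partial derivative of `u : ℝⁿ → ℝ` in the `i`-th coordinate direction. -/
noncomputable def pd {n : ℕ} (i : Fin n) (u : (Fin n → ℝ) → ℝ) : (Fin n → ℝ) → ℝ :=
  fun x => deriv (fun t => u (Function.update x i t)) (x i)

/-- Euclidean Laplacian `Δu = ∑ᵢ ∂²u/∂xᵢ²`. -/
noncomputable def lap {n : ℕ} (u : (Fin n → ℝ) → ℝ) : (Fin n → ℝ) → ℝ :=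
  fun x => ∑ i : Fin n, pd i (pd i u) x

/-!
Separation of variables. Each factor `sin(mᵢπxᵢ/lᵢ)` is an eigenfunction of `∂²/∂xᵢ²` with
eigenvalue `-(mᵢπ/lᵢ)²`, so `Δ` acts on `u = (∏ᵢ sin(mᵢπxᵢ/lᵢ)) Y(xₙ)` through the ODE operator
`Y ↦ Y'' - η²Y` on the last factor. On the span of `cosh ηs, sinh ηs, s cosh ηs, s sinh ηs` this
operator maps onto the span of `cosh ηs, sinh ηs` and then kills it, which gives `Δ²u = 0`.
The boundary conditions reduce to values of `Y`, `Y'` and `(Y'' - η²Y)'` at `0` and `lₙ`, where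
the coefficients of `Y` were chosen to make `Y(lₙ) = Y'(lₙ) = 0`; the denominator
`sinh²(ηlₙ) - η²lₙ²` is positive because `η > 0`.
-/

open Real

noncomputable def sepProd {n : ℕ} (G : Fin n → ℝ → ℝ) : (Fin n → ℝ) → ℝ :=
  fun x => ∏ i, G i (x i)

section SepProd

variable {n : ℕ} (G : Fin n → ℝ → ℝ)

lemma sepProd_update (i : Fin n) (h : ℝ → ℝ) (x : Fin n → ℝ) :
    sepProd (Function.update G i h) x = h (x i) * ∏ j ∈ Finset.univ.erase i, G j (x j) := by
  rw [sepProd, ← Finset.mul_prod_erase _ _ (Finset.mem_univ i), Function.update_self]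
  congr 1
  refine Finset.prod_congr rfl fun j hj => ?_
  rw [Function.update_of_ne (Finset.ne_of_mem_erase hj)]

lemma sepProd_update_const_mul (i : Fin n) (a : ℝ) (x : Fin n → ℝ) :
    sepProd (Function.update G i fun s => a * G i s) x = a * sepProd G x := by
  rw [sepProd_update, ← Function.update_eq_self i G, sepProd_update, Function.update_eq_self,
    mul_assoc]

lemma pd_sepProd (i : Fin n) :
    pd i (sepProd G) = sepProd (Function.update G i (deriv (G i))) := by
  funext x
  have hslice : (fun t => sepProd G (Function.update x i t)) =
      fun t => G i t * ∏ j ∈ Finset.univ.erase i, G j (x j) := by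
    funext t
    rw [← Function.update_eq_self i G, sepProd_update, Function.update_eq_self]
    simp only [Function.update_self]
    congr 1
    refine Finset.prod_congr rfl fun j hj => ?_
    rw [Function.update_of_ne (Finset.ne_of_mem_erase hj)]
  rw [pd, hslice, deriv_mul_const_field, sepProd_update]

lemma lap_sepProd (x : Fin n → ℝ) :
    lap (sepProd G) x = ∑ i, sepProd (Function.update G i (deriv (deriv (G i)))) x := by
  refine Finset.sum_congr rfl fun i _ => ?_
  rw [pd_sepProd, pd_sepProd, Function.update_self, Function.update_idem]

end SepProd

lemma sepProd_snoc {k : ℕ} (S : Fin k → ℝ → ℝ) (W : ℝ → ℝ) (x : Fin (k + 1) → ℝ) :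
    sepProd (Fin.snoc S W) x = (∏ j : Fin k, S j (x j.castSucc)) * W (x (Fin.last k)) := by
  simp only [sepProd, Fin.prod_univ_castSucc, Fin.snoc_castSucc, Fin.snoc_last]

lemma pd_last_sepProd_snoc {k : ℕ} (S : Fin k → ℝ → ℝ) (W : ℝ → ℝ) :
    pd (Fin.last k) (sepProd (Fin.snoc S W)) = sepProd (Fin.snoc S (deriv W)) := by
  rw [pd_sepProd, Fin.snoc_last, Fin.update_snoc_last]

noncomputable def modHelmholtz (η : ℝ) (W : ℝ → ℝ) : ℝ → ℝ :=
  fun s => deriv (deriv W) s - η ^ 2 * W s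

lemma deriv_deriv_sin_const_mul (c : ℝ) :
    deriv (deriv fun s => sin (c * s)) = fun s => -c ^ 2 * sin (c * s) := by
  have hlin (s : ℝ) : HasDerivAt (fun t => c * t) c s := by
    simpa using (hasDerivAt_id s).const_mul c
  have hsin : deriv (fun s => sin (c * s)) = fun s => c * cos (c * s) := by
    funext s
    rw [(hlin s).sin.deriv, mul_comm]
  funext s
  rw [hsin, ((hlin s).cos.const_mul c).deriv]
  ring

lemma lap_sepProd_snoc_sin {k : ℕ} (c : Fin k → ℝ) (η : ℝ) (hη : η ^ 2 = ∑ j, c j ^ 2)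
    (W : ℝ → ℝ) :
    lap (sepProd (Fin.snoc (fun j s => sin (c j * s)) W)) =
      sepProd (Fin.snoc (fun j s => sin (c j * s)) (modHelmholtz η W)) := by
  set S : Fin k → ℝ → ℝ := fun j s => sin (c j * s)
  funext x
  have hlateral : ∀ j : Fin k,
      sepProd (Function.update (Fin.snoc S W) j.castSucc
        (deriv (deriv ((Fin.snoc S W : Fin (k + 1) → ℝ → ℝ) j.castSucc)))) x =
        -c j ^ 2 * sepProd (Fin.snoc S W) x := by
    intro j
    rw [Fin.snoc_castSucc, deriv_deriv_sin_const_mul,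
      ← sepProd_update_const_mul (Fin.snoc S W) j.castSucc]
    simp only [Fin.snoc_castSucc, S]
  rw [lap_sepProd, Fin.sum_univ_castSucc]
  simp only [hlateral, Fin.snoc_last, Fin.update_snoc_last, ← Finset.sum_mul,
    Finset.sum_neg_distrib, ← hη, sepProd_snoc, modHelmholtz]
  ring

noncomputable def coshSinhComb (η a b p q : ℝ) : ℝ → ℝ := fun s =>
  a * cosh (η * s) + b * sinh (η * s) + p * (s * cosh (η * s)) + q * (s * sinh (η * s))

section CoshSinhComb

variable (η a b p q : ℝ)

lemma coshSinhComb_zero : coshSinhComb η a b p q 0 = a := by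
  simp [coshSinhComb]

lemma hasDerivAt_coshSinhComb (s : ℝ) :
    HasDerivAt (coshSinhComb η a b p q)
      (coshSinhComb η (b * η + p) (a * η + q) (q * η) (p * η) s) s := by
  have hlin : HasDerivAt (fun t => η * t) η s := by simpa using (hasDerivAt_id s).const_mul η
  have hc := (hasDerivAt_cosh (η * s)).comp s hlin
  have hs := (hasDerivAt_sinh (η * s)).comp s hlin
  refine ((((hc.const_mul a).add (hs.const_mul b)).add
    (((hasDerivAt_id s).mul hc).const_mul p)).add
    (((hasDerivAt_id s).mul hs).const_mul q)).congr_deriv ?_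
  simp only [coshSinhComb, id, Function.comp_apply]
  ring

lemma deriv_coshSinhComb :
    deriv (coshSinhComb η a b p q) = coshSinhComb η (b * η + p) (a * η + q) (q * η) (p * η) :=
  funext fun s => (hasDerivAt_coshSinhComb η a b p q s).deriv

lemma modHelmholtz_coshSinhComb :
    modHelmholtz η (coshSinhComb η a b p q) = coshSinhComb η (2 * η * q) (2 * η * p) 0 0 := by
  funext s
  simp only [modHelmholtz, deriv_coshSinhComb, coshSinhComb]
  ring

lemma modHelmholtz_modHelmholtz_coshSinhComb :
    modHelmholtz η (modHelmholtz η (coshSinhComb η a b p q)) = 0 := by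
  rw [modHelmholtz_coshSinhComb, modHelmholtz_coshSinhComb]
  funext s
  simp [coshSinhComb]

end CoshSinhComb

-- The Steklov eigenvalue of the profile is `2η³` times this coefficient.
noncomputable def steklovCoeff (η L : ℝ) : ℝ :=
  (sinh (η * L) * cosh (η * L) + η * L) / (sinh (η * L) ^ 2 - η ^ 2 * L ^ 2)

noncomputable def steklovProfile (η L : ℝ) : ℝ → ℝ :=
  coshSinhComb η 1 (-steklovCoeff η L) (η * steklovCoeff η L)
    (-(η * sinh (η * L) ^ 2 / (sinh (η * L) ^ 2 - η ^ 2 * L ^ 2)))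

section SteklovProfile

variable (η L : ℝ)

lemma steklovProfile_zero : steklovProfile η L 0 = 1 :=
  coshSinhComb_zero ..

lemma deriv_steklovProfile_zero : deriv (steklovProfile η L) 0 = 0 := by
  rw [steklovProfile, deriv_coshSinhComb, coshSinhComb_zero]
  ring

lemma deriv_modHelmholtz_steklovProfile_zero :
    deriv (modHelmholtz η (steklovProfile η L)) 0 = 2 * η ^ 3 * steklovCoeff η L := by
  rw [steklovProfile, modHelmholtz_coshSinhComb, deriv_coshSinhComb, coshSinhComb_zero]
  ring

variable {η L} (hD : sinh (η * L) ^ 2 - η ^ 2 * L ^ 2 ≠ 0)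
include hD

lemma steklovProfile_self : steklovProfile η L L = 0 := by
  simp only [steklovProfile, steklovCoeff, coshSinhComb]
  field_simp
  linear_combination (η * L * sinh (η * L)) * cosh_sq_sub_sinh_sq (η * L)

lemma deriv_steklovProfile_self : deriv (steklovProfile η L) L = 0 := by
  simp only [steklovProfile, steklovCoeff, deriv_coshSinhComb, coshSinhComb]
  field_simp
  ring

end SteklovProfile

lemma sinh_sq_sub_sq_pos {t : ℝ} (ht : 0 < t) : 0 < sinh t ^ 2 - t ^ 2 := by
  have := self_lt_sinh_iff.mpr ht
  nlinarith

lemma sin_nat_mul_pi_div_mul_eq_zero (m : ℕ) {l x : ℝ} (hl : l ≠ 0) (hx : x = 0 ∨ x = l) :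
    sin (m * π / l * x) = 0 := by
  rcases hx with rfl | rfl
  · simp
  · rw [div_mul_cancel₀ _ hl, sin_nat_mul_pi]

lemma sum_nat_mul_pi_div_sq_pos {k : ℕ} (hk : 1 ≤ k) (l : Fin k → ℝ) (hl : ∀ i, 0 < l i)
    (m : Fin k → ℕ) (hm : ∀ i, 1 ≤ m i) : 0 < ∑ i, ((m i : ℝ) * π / l i) ^ 2 := by
  refine Finset.sum_pos (fun i _ => ?_) ⟨⟨0, hk⟩, Finset.mem_univ _⟩
  have := hl i
  have : (0 : ℝ) < m i := by exact_mod_cast hm i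
  positivity

/-- The separated biharmonic functions
`u(x) = (∏ᵢ sin(mᵢπxᵢ/lᵢ)) Y(xₙ)` on the box `[0,l₁] × ⋯ × [0,l_{k+1}]`
(dimension `n = k+1 ≥ 2`, positive integers `m₁,…,m_k`) satisfy `Δ²u = 0`,
`∂u/∂xₙ = 0` on `{xₙ = 0}`, `u = ∂u/∂xₙ = 0` on `{xₙ = lₙ}`, `u = Δu = 0` on the
lateral faces, and `∂(Δu)/∂xₙ = 2η³ ((sinh ηlₙ cosh ηlₙ + ηlₙ)/(sinh² ηlₙ − η²lₙ²)) u`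
on `{xₙ = 0}`, where `η = (∑ᵢ (mᵢπ/lᵢ)²)^{1/2}`. -/
theorem biharmonic_steklov_eigenfunction_dirichlet_lateral
    (k : ℕ) (hk : 1 ≤ k) (l : Fin (k + 1) → ℝ) (hl : ∀ i, 0 < l i)
    (m : Fin k → ℕ) (hm : ∀ i, 1 ≤ m i)
    (η : ℝ)
    (hη : η = Real.sqrt (∑ i : Fin k, ((m i : ℝ) * Real.pi / l i.castSucc) ^ 2))
    (Y : ℝ → ℝ)
    (hY : ∀ s : ℝ, Y s =
      Real.cosh (η * s)
      - ((Real.sinh (η * l (Fin.last k)) * Real.cosh (η * l (Fin.last k))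
            + η * l (Fin.last k)) /
          (Real.sinh (η * l (Fin.last k)) ^ 2 - η ^ 2 * l (Fin.last k) ^ 2))
          * Real.sinh (η * s)
      + ((η * Real.sinh (η * l (Fin.last k)) * Real.cosh (η * l (Fin.last k))
            + η ^ 2 * l (Fin.last k)) /
          (Real.sinh (η * l (Fin.last k)) ^ 2 - η ^ 2 * l (Fin.last k) ^ 2))
          * s * Real.cosh (η * s)
      - ((η * Real.sinh (η * l (Fin.last k)) ^ 2) /
          (Real.sinh (η * l (Fin.last k)) ^ 2 - η ^ 2 * l (Fin.last k) ^ 2))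
          * s * Real.sinh (η * s))
    (u : (Fin (k + 1) → ℝ) → ℝ)
    (hu : ∀ x : Fin (k + 1) → ℝ, u x =
      (∏ i : Fin k,
        Real.sin ((m i : ℝ) * Real.pi * x i.castSucc / l i.castSucc)) *
      Y (x (Fin.last k))) :
    (∀ x : Fin (k + 1) → ℝ, lap (lap u) x = 0) ∧
    (∀ x : Fin (k + 1) → ℝ, x (Fin.last k) = 0 → pd (Fin.last k) u x = 0) ∧
    (∀ x : Fin (k + 1) → ℝ, x (Fin.last k) = l (Fin.last k) →
      u x = 0 ∧ pd (Fin.last k) u x = 0) ∧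
    (∀ (x : Fin (k + 1) → ℝ) (i : Fin k),
      (x i.castSucc = 0 ∨ x i.castSucc = l i.castSucc) → u x = 0 ∧ lap u x = 0) ∧
    (∀ x : Fin (k + 1) → ℝ, x (Fin.last k) = 0 →
      pd (Fin.last k) (lap u) x =
        2 * η ^ 3 *
          ((Real.sinh (η * l (Fin.last k)) * Real.cosh (η * l (Fin.last k))
              + η * l (Fin.last k)) /
            (Real.sinh (η * l (Fin.last k)) ^ 2 - η ^ 2 * l (Fin.last k) ^ 2)) *
          u x) := by
  set L := l (Fin.last k)
  set c : Fin k → ℝ := fun j => m j * π / l j.castSucc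
  set S : Fin k → ℝ → ℝ := fun j s => sin (c j * s)
  have hc : η ^ 2 = ∑ j, c j ^ 2 := by
    rw [hη, sq_sqrt (Finset.sum_nonneg fun _ _ => sq_nonneg _)]
  have hη0 : 0 < η := by
    rw [hη, sqrt_pos]
    exact sum_nat_mul_pi_div_sq_pos hk (fun i => l i.castSucc) (fun i => hl _) m hm
  have hD : sinh (η * L) ^ 2 - η ^ 2 * L ^ 2 ≠ 0 := by
    rw [← mul_pow]; exact (sinh_sq_sub_sq_pos (mul_pos hη0 (hl _))).ne'
  have hYprof : Y = steklovProfile η L := by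
    funext s
    rw [hY, steklovProfile, steklovCoeff, coshSinhComb]
    ring
  subst hYprof
  have hu' : u = sepProd (Fin.snoc S (steklovProfile η L)) := by
    funext x
    rw [hu, sepProd_snoc]
    congr 1
    exact Finset.prod_congr rfl fun j _ => by simp only [S, c]; ring_nf
  have hlap : lap u = sepProd (Fin.snoc S (modHelmholtz η (steklovProfile η L))) := by
    rw [hu', lap_sepProd_snoc_sin c η hc]
  refine ⟨fun x => ?_, fun x hx => ?_, fun x hx => ⟨?_, ?_⟩, fun x i hi => ?_, fun x hx => ?_⟩
  · rw [hlap, lap_sepProd_snoc_sin c η hc, steklovProfile,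
      modHelmholtz_modHelmholtz_coshSinhComb, sepProd_snoc, Pi.zero_apply, mul_zero]
  · rw [hu', pd_last_sepProd_snoc, sepProd_snoc, hx, deriv_steklovProfile_zero, mul_zero]
  · rw [hu', sepProd_snoc, hx, steklovProfile_self hD, mul_zero]
  · rw [hu', pd_last_sepProd_snoc, sepProd_snoc, hx, deriv_steklovProfile_self hD,
      mul_zero]
  · have hlateral : ∏ j, S j (x j.castSucc) = 0 :=
      Finset.prod_eq_zero (Finset.mem_univ i)
        (sin_nat_mul_pi_div_mul_eq_zero (m i) (hl i.castSucc).ne' hi)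
    rw [hlap, hu', sepProd_snoc, sepProd_snoc, hlateral, zero_mul, zero_mul]
    exact ⟨rfl, rfl⟩
  · rw [hlap, hu', pd_last_sepProd_snoc, sepProd_snoc, sepProd_snoc, hx,
      deriv_modHelmholtz_steklovProfile_zero, steklovProfile_zero, steklovCoeff]
    ring
end

section
/- Let n ≥ 2 and let l₁, …, l_{n−1} > 0. For R > 0 let N₊(R) be the number of (n−1)-tuples (m₁, …, m_{n−1}) of positive integers with Σ_{i=1}^{n−1} (m_i/l_i)² ≤ R², and let N₀(R) be the number of (n−1)-tuples (m₁, …, m_{n−1}) of nonnegative integers with Σ_{i=1}^{n−1} m_i ≥ 1 and Σ_{i=1}^{n−1} (m_i/l_i)² ≤ R². Then N₊(R)/R^{n−1} → ω_{n−1}·2^{−(n−1)}·l₁⋯l_{n−1} and N₀(R)/R^{n−1} → ω_{n−1}·2^{−(n−1)}·l₁⋯l_{n−1} as R → +∞, where ω_{n−1} is the Lebesgue volume of the unit ball in ℝ^{n−1}. -/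
/-!
Let `E ⊆ ℝᵏ` be the part of the ellipsoid `∑ (zᵢ/lᵢ)² ≤ 1` in the open (for `N₊`) or closed
(for `N₀`) positive orthant. Then `N₊(R)` is the number of points of `ℤᵏ ∩ R • E`, and `N₀(R)` is
that number minus one (the origin). `E` is bounded and convex, so its frontier is Lebesgue-null
and the lattice-point count of `R • E` is asymptotic to `vol(E) Rᵏ`. The two orthants differ by a
null set, and `E` is the image of the unit-ball orthant under `diag(l)`; reflecting in the
coordinate hyperplanes one at a time shows that this orthant has `2⁻ᵏ` of the volume of the ball.
-/

open Filter MeasureTheory Metric Set Bornology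
open scoped ENNReal Pointwise Topology

namespace EllipsoidLatticeCount

variable {ι : Type*} [Fintype ι]

section Reflection

variable [DecidableEq ι]

def reflect (j : ι) (z : ι → ℝ) : ι → ℝ := fun i => if i = j then -z i else z i

lemma measurePreserving_reflect (j : ι) : MeasurePreserving (reflect j) :=
  volume_preserving_pi (f := fun i (x : ℝ) => if i = j then -x else x) fun i => by
    by_cases h : i = j
    · simpa [h] using Measure.measurePreserving_neg (volume : Measure ℝ)
    · simp only [h, if_false]
      exact MeasurePreserving.id _

lemma two_mul_volume_inter_coord_nonneg {s : Set (ι → ℝ)} (hs : MeasurableSet s) (j : ι)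
    (hsymm : reflect j ⁻¹' s = s) :
    2 * volume (s ∩ {z | 0 ≤ z j}) = volume s := by
  have hH : MeasurableSet {z : ι → ℝ | 0 ≤ z j} :=
    measurableSet_le measurable_const (measurable_pi_apply j)
  have hrefl : volume (s ∩ {z | z j ≤ 0}) = volume (s ∩ {z | 0 ≤ z j}) := by
    have : reflect j ⁻¹' (s ∩ {z | 0 ≤ z j}) = s ∩ {z | z j ≤ 0} := by
      ext z; simp [preimage_inter, hsymm, reflect]
    rw [← this, (measurePreserving_reflect j).measure_preimage (hs.inter hH).nullMeasurableSet]
  have hdiff : s \ {z | 0 ≤ z j} = (s ∩ {z | z j ≤ 0}) \ {z | z j = 0} := by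
    ext z; simp [lt_iff_le_and_ne, and_assoc]
  have hnull : volume {z : ι → ℝ | z j = 0} = 0 := Measure.pi_hyperplane _ j 0
  rw [← measure_inter_add_sdiff s hH, hdiff, measure_sdiff_null hnull, hrefl, two_mul]

lemma two_pow_mul_volume_inter_nonneg {s : Set (ι → ℝ)} (hs : MeasurableSet s)
    (hsymm : ∀ j, reflect j ⁻¹' s = s) :
    2 ^ Fintype.card ι * volume (s ∩ univ.pi fun _ => Ici 0) = volume s := by
  suffices ∀ t : Finset ι, 2 ^ t.card * volume (s ∩ (t : Set ι).pi fun _ => Ici 0) = volume s by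
    simpa using this Finset.univ
  intro t
  induction t using Finset.induction_on with
  | empty => simp
  | @insert j t hj ih =>
    have hmeas : MeasurableSet (s ∩ (t : Set ι).pi fun _ => Ici 0) :=
      hs.inter (.pi t.countable_toSet fun _ _ => measurableSet_Ici)
    have hsymm' : reflect j ⁻¹' (s ∩ (t : Set ι).pi fun _ => Ici 0) =
        s ∩ (t : Set ι).pi fun _ => Ici 0 := by
      rw [preimage_inter, hsymm]
      congr 1
      ext z
      simp only [mem_preimage, Set.mem_pi]
      exact forall₂_congr fun i hi => by simp [reflect, ne_of_mem_of_not_mem hi hj]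
    rw [Finset.coe_insert, insert_pi, Finset.card_insert_of_notMem hj, pow_succ, mul_assoc,
      ← ih, ← two_mul_volume_inter_coord_nonneg hmeas j hsymm', inter_left_comm, inter_comm]
    rfl

end Reflection

def ellipsoid (l : ι → ℝ) : Set (ι → ℝ) := {z | ∑ i, (z i / l i) ^ 2 ≤ 1}

lemma ellipsoid_eq_preimage [DecidableEq ι] (l : ι → ℝ) :
    ellipsoid l = Matrix.toLin' (Matrix.diagonal fun i => (l i)⁻¹) ⁻¹' ellipsoid 1 := by
  ext z
  simp [ellipsoid, Matrix.toLin'_apply, Matrix.mulVec_diagonal, div_eq_inv_mul]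

lemma ellipsoid_one_eq_preimage :
    ellipsoid (1 : ι → ℝ) = WithLp.toLp 2 ⁻¹' closedBall (0 : EuclideanSpace ℝ ι) 1 := by
  ext z
  simp [ellipsoid, EuclideanSpace.norm_eq, Real.sqrt_le_one]

lemma convex_ellipsoid (l : ι → ℝ) : Convex ℝ (ellipsoid l) := by
  classical
  rw [ellipsoid_eq_preimage, ellipsoid_one_eq_preimage]
  exact ((convex_closedBall _ _).linear_preimage
    (WithLp.linearEquiv 2 ℝ (ι → ℝ)).symm.toLinearMap).linear_preimage _

lemma measurableSet_ellipsoid (l : ι → ℝ) : MeasurableSet (ellipsoid l) :=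
  measurableSet_le (by fun_prop) measurable_const

lemma abs_le_of_sum_div_sq_le {l z : ι → ℝ} (hl : ∀ i, l i ≠ 0) {r : ℝ}
    (h : ∑ i, (z i / l i) ^ 2 ≤ r ^ 2) (i : ι) : |z i| ≤ |r| * |l i| := by
  have hi : (z i / l i) ^ 2 ≤ r ^ 2 :=
    (Finset.single_le_sum (fun j _ => sq_nonneg (z j / l j)) (Finset.mem_univ i)).trans h
  rwa [sq_le_sq, abs_div, div_le_iff₀ (abs_pos.2 (hl i))] at hi

lemma isBounded_ellipsoid {l : ι → ℝ} (hl : ∀ i, l i ≠ 0) : IsBounded (ellipsoid l) :=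
  (IsBounded.pi fun i => isBounded_Icc (-|l i|) |l i|).subset fun z hz i _ =>
    abs_le.1 <| by simpa using abs_le_of_sum_div_sq_le hl (r := 1) (by simpa [ellipsoid] using hz) i

lemma inv_smul_mem_ellipsoid_iff (l z : ι → ℝ) {R : ℝ} (hR : 0 < R) :
    R⁻¹ • z ∈ ellipsoid l ↔ ∑ i, (z i / l i) ^ 2 ≤ R ^ 2 := by
  simp only [ellipsoid, mem_ofPred_eq, Pi.smul_apply, smul_eq_mul, mul_div_assoc, mul_pow,
    ← Finset.mul_sum, inv_pow, inv_mul_le_iff₀ (pow_pos hR 2), mul_one]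

lemma volume_ellipsoid_one_inter_nonneg [Nonempty ι] :
    volume (ellipsoid (1 : ι → ℝ) ∩ univ.pi fun _ => Ici 0) =
      2⁻¹ ^ Fintype.card ι * volume (ball (0 : EuclideanSpace ℝ ι) 1) := by
  classical
  have hsymm : ∀ j, reflect j ⁻¹' ellipsoid (1 : ι → ℝ) = ellipsoid 1 := fun j => by
    ext z; simp [ellipsoid, reflect, apply_ite (· ^ 2)]
  rw [← Measure.addHaar_closedBall_eq_addHaar_ball,
    ← (PiLp.volume_preserving_toLp ι).measure_preimage measurableSet_closedBall.nullMeasurableSet,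
    ← ellipsoid_one_eq_preimage,
    ← two_pow_mul_volume_inter_nonneg (measurableSet_ellipsoid 1) hsymm, ← mul_assoc, ← mul_pow,
    ENNReal.inv_mul_cancel two_ne_zero ENNReal.ofNat_ne_top, one_pow, one_mul]

lemma volume_real_ellipsoid_inter_nonneg [Nonempty ι] {l : ι → ℝ} (hl : ∀ i, 0 < l i) :
    volume.real (ellipsoid l ∩ univ.pi fun _ => Ici 0) =
      volume.real (ball (0 : EuclideanSpace ℝ ι) 1) * 2⁻¹ ^ Fintype.card ι * ∏ i, l i := by
  classical
  set f : (ι → ℝ) →ₗ[ℝ] ι → ℝ := Matrix.toLin' (Matrix.diagonal fun i => (l i)⁻¹)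
  have hdet : LinearMap.det f = ∏ i, (l i)⁻¹ := by
    rw [LinearMap.det_toLin', Matrix.det_diagonal]
  have hdet0 : LinearMap.det f ≠ 0 := by
    rw [hdet]; exact Finset.prod_ne_zero_iff.2 fun i _ => inv_ne_zero (hl i).ne'
  have hpre : ellipsoid l ∩ univ.pi (fun _ => Ici 0) =
      f ⁻¹' (ellipsoid 1 ∩ univ.pi fun _ => Ici 0) := by
    rw [preimage_inter, ← ellipsoid_eq_preimage]
    congr 1
    ext z
    simp only [f, mem_preimage, Set.mem_univ_pi, mem_Ici, Matrix.toLin'_apply,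
      Matrix.mulVec_diagonal]
    exact forall_congr' fun i => (mul_nonneg_iff_of_pos_left (inv_pos.2 (hl i))).symm
  have hprod : 0 < ∏ i, l i := Finset.prod_pos fun i _ => hl i
  rw [measureReal_def, measureReal_def, hpre, Measure.addHaar_preimage_linearMap _ hdet0, hdet,
    Finset.prod_inv_distrib, inv_inv, abs_of_pos hprod, volume_ellipsoid_one_inter_nonneg,
    ENNReal.toReal_mul, ENNReal.toReal_mul, ENNReal.toReal_ofReal hprod.le, ENNReal.toReal_pow,
    ENNReal.toReal_inv, ENNReal.toReal_ofNat]
  ring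

lemma volume_real_ellipsoid_inter_pos (l : ι → ℝ) :
    volume.real (ellipsoid l ∩ univ.pi fun _ => Ioi 0) =
      volume.real (ellipsoid l ∩ univ.pi fun _ => Ici 0) :=
  measureReal_congr <| (ae_eq_refl _).inter (Measure.pi_Ioi_ae_eq_pi_Ici (s := univ))

def natPoints (l : ι → ℝ) (I : Set ℝ) (R : ℝ) : Set (ι → ℕ) :=
  {m | (∀ i, (m i : ℝ) ∈ I) ∧ ∑ i, ((m i : ℝ) / l i) ^ 2 ≤ R ^ 2}

lemma finite_natPoints {l : ι → ℝ} (hl : ∀ i, l i ≠ 0) (I : Set ℝ) (R : ℝ) :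
    (natPoints l I R).Finite :=
  (Finite.pi' fun i => finite_Iic ⌊|R| * |l i|⌋₊).subset fun _ hm i =>
    Nat.le_floor <| (le_abs_self _).trans (abs_le_of_sum_div_sq_le hl hm.2 i)

lemma mem_span_basisFun_iff {w : ι → ℝ} :
    w ∈ Submodule.span ℤ (range (Pi.basisFun ℝ ι)) ↔ ∀ i, ∃ n : ℤ, (n : ℝ) = w i := by
  simp [Module.Basis.mem_span_iff_repr_mem ℤ (Pi.basisFun ℝ ι)]

section Cone

variable {I : Set ℝ} (hI : ∀ ⦃t x : ℝ⦄, 0 < t → x ∈ I → t * x ∈ I)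

include hI in
lemma smul_ellipsoid_inter_subset_smul (l : ι → ℝ) {x y : ℝ} (hx : 0 < x) (hxy : x ≤ y) :
    x • (ellipsoid l ∩ univ.pi fun _ => I) ⊆ y • (ellipsoid l ∩ univ.pi fun _ => I) := by
  rintro _ ⟨z, ⟨hzE, hzI⟩, rfl⟩
  have hy := hx.trans_le hxy
  refine ⟨(x / y) • z, ⟨?_, fun i _ => hI (div_pos hx hy) (hzI i trivial)⟩, ?_⟩
  · exact (convex_ellipsoid l).smul_mem_of_zero_mem (by simp [ellipsoid]) hzE
      ⟨(div_pos hx hy).le, (div_le_one hy).2 hxy⟩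
  · simp only [smul_smul, mul_div_cancel₀ _ hy.ne']

include hI in
lemma natCard_ellipsoid_inter_inv_smul_span (hI₀ : I ⊆ Ici 0) (l : ι → ℝ) {R : ℝ} (hR : 0 < R) :
    Nat.card ↑(ellipsoid l ∩ univ.pi (fun _ => I) ∩
      R⁻¹ • (Submodule.span ℤ (range (Pi.basisFun ℝ ι)) : Set (ι → ℝ))) =
      (natPoints l I R).ncard := by
  have hinj : Function.Injective fun m : ι → ℕ => R⁻¹ • fun i => (m i : ℝ) :=
    fun m m' h => funext fun i => by simpa [hR.ne'] using congrFun h i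
  rw [Nat.card_coe_set_eq, ← ncard_image_of_injective _ hinj]
  congr 1
  ext z
  simp only [mem_image, mem_inter_iff, Set.mem_univ_pi, mem_smul_set, SetLike.mem_coe,
    mem_span_basisFun_iff]
  constructor
  · rintro ⟨⟨hz, hzI⟩, w, hw, rfl⟩
    have hwI : ∀ i, w i ∈ I := fun i => by simpa [hR.ne'] using hI hR (hzI i)
    choose n hn using hw
    have hm : ∀ i, ((n i).toNat : ℝ) = w i := fun i => by
      have h0 : (0 : ℝ) ≤ n i := hn i ▸ hI₀ (hwI i)
      rw [← hn i, ← Int.cast_natCast, Int.toNat_of_nonneg (Int.cast_nonneg_iff.1 h0)]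
    refine ⟨fun i => (n i).toNat, ⟨fun i => ?_, ?_⟩, ?_⟩
    · rw [hm]; exact hwI i
    · simpa only [hm] using (inv_smul_mem_ellipsoid_iff l w hR).1 hz
    · simp only [hm]
  · rintro ⟨m, ⟨hmI, hmQ⟩, rfl⟩
    exact ⟨⟨(inv_smul_mem_ellipsoid_iff l _ hR).2 hmQ, fun i => hI (inv_pos.2 hR) (hmI i)⟩,
      _, fun i => ⟨m i, rfl⟩, rfl⟩

include hI in
lemma tendsto_ncard_natPoints_div_pow (hI₀ : I ⊆ Ici 0) (hIc : Convex ℝ I)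
    (hIm : MeasurableSet I) {l : ι → ℝ} (hl : ∀ i, l i ≠ 0) :
    Tendsto (fun R => ((natPoints l I R).ncard : ℝ) / R ^ Fintype.card ι) atTop
      (𝓝 (volume.real (ellipsoid l ∩ univ.pi fun _ => I))) := by
  refine (tendsto_card_div_pow_atTop_volume' _ ((isBounded_ellipsoid hl).subset inter_subset_left)
    ((measurableSet_ellipsoid l).inter (.univ_pi fun _ => hIm))
    (((convex_ellipsoid l).inter (convex_pi fun _ _ => hIc)).addHaar_frontier volume)
    fun _ _ => smul_ellipsoid_inter_subset_smul hI l).congr' ?_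
  filter_upwards [eventually_gt_atTop 0] with R hR
  rw [natCard_ellipsoid_inter_inv_smul_span hI hI₀ l hR]

end Cone

end EllipsoidLatticeCount

open EllipsoidLatticeCount

/-- Lattice point counting in ellipsoids: both the number `N₊(R)` of tuples of positive
integers and the number `N₀(R)` of tuples of nonnegative integers (not all zero)
`(m₁, …, m_k)` with `∑ (mᵢ/lᵢ)² ≤ R²` satisfy
`N(R)/R^k → ω_k · 2^{−k} · l₁⋯l_k` as `R → ∞`, where `ω_k` is the volume of the unit
ball of `ℝ^k` (here `k = n − 1 ≥ 1`). -/
theorem ellipsoid_lattice_point_count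
    (k : ℕ) (hk : 1 ≤ k) (l : Fin k → ℝ) (hl : ∀ i, 0 < l i) :
    Tendsto (fun R : ℝ =>
        (Set.ncard {m : Fin k → ℕ |
            (∀ i, 1 ≤ m i) ∧ ∑ i, ((m i : ℝ) / l i) ^ 2 ≤ R ^ 2} : ℝ) / R ^ k)
      atTop
      (nhds ((MeasureTheory.volume
          (Metric.ball (0 : EuclideanSpace ℝ (Fin k)) 1)).toReal *
        (2 : ℝ)⁻¹ ^ k * ∏ i, l i)) ∧
    Tendsto (fun R : ℝ =>
        (Set.ncard {m : Fin k → ℕ |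
            1 ≤ ∑ i, m i ∧ ∑ i, ((m i : ℝ) / l i) ^ 2 ≤ R ^ 2} : ℝ) / R ^ k)
      atTop
      (nhds ((MeasureTheory.volume
          (Metric.ball (0 : EuclideanSpace ℝ (Fin k)) 1)).toReal *
        (2 : ℝ)⁻¹ ^ k * ∏ i, l i)) := by
  rw [← measureReal_def]
  have : Nonempty (Fin k) := ⟨⟨0, hk⟩⟩
  have hl₀ : ∀ i, l i ≠ 0 := fun i => (hl i).ne'
  have hV := volume_real_ellipsoid_inter_nonneg hl
  rw [Fintype.card_fin] at hV
  have hpos := tendsto_ncard_natPoints_div_pow (fun _ _ => mul_pos) Ioi_subset_Ici_self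
    (convex_Ioi 0) measurableSet_Ioi hl₀
  have hnonneg := tendsto_ncard_natPoints_div_pow (fun _ _ ht => mul_nonneg ht.le) subset_rfl
    (convex_Ici 0) measurableSet_Ici hl₀
  rw [volume_real_ellipsoid_inter_pos, hV, Fintype.card_fin] at hpos
  rw [hV, Fintype.card_fin] at hnonneg
  refine ⟨by simpa [natPoints, Nat.one_le_iff_ne_zero, Nat.pos_iff_ne_zero] using hpos, ?_⟩
  have hzero : ∀ R, {m : Fin k → ℕ | 1 ≤ ∑ i, m i ∧ ∑ i, ((m i : ℝ) / l i) ^ 2 ≤ R ^ 2} =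
      natPoints l (Ici 0) R \ {0} := fun R => by
    ext m
    simp [natPoints, Nat.one_le_iff_ne_zero, funext_iff, and_comm]
  have hcard : ∀ R, ((natPoints l (Ici 0) R \ {0}).ncard : ℝ) =
      (natPoints l (Ici 0) R).ncard - 1 := fun R => by
    have h0 : (0 : Fin k → ℕ) ∈ natPoints l (Ici 0) R := by simp [natPoints, sq_nonneg]
    rw [← ncard_sdiff_singleton_add_one h0 (finite_natPoints hl₀ _ R)]
    push_cast; ring
  simp_rw [hzero, hcard, sub_div, one_div]
  simpa using hnonneg.sub (tendsto_pow_atTop (by omega : k ≠ 0)).inv_tendsto_atTop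
end
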